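/- arXiv:1910.09958 — 2 statements merged into one kernel-verified Lean document; each statement's English description precedes it below -/
import Mathlib

section
/- Let g and f be holomorphic on a domain Ω ⊆ ℂ with f and g′ never vanishing, set λ = |f|²(1 + |g|²)² and φ = -½ log λ. If the Liouville-type equation Δφ + e^{2φ} = 0 holds on Ω, then |f·g′| = 1/2 everywhere on Ω, and consequently f = (e^{iθ₀}/2)·(1/g′) for some real constant θ₀. -/
open Complex

/-- The Laplacian `φ_uu + φ_vv` of a function `φ : ℂ → ℝ`, identifying `ℂ ≅ ℝ²`. -/
noncomputable def lap2 (φ : ℂ → ℝ) (w : ℂ) : ℝ :=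
  deriv (deriv (fun u : ℝ => φ (u + w.im * Complex.I))) w.re +
  deriv (deriv (fun v : ℝ => φ (w.re + v * Complex.I))) w.im


noncomputable def Afun (h : ℂ → ℂ) (c : ℝ) (b e : ℂ) (t : ℝ) : ℝ :=
  2 * ((starRingEnd ℂ) (h (b + t * e)) * (e * deriv h (b + t * e))).re
    / (c + Complex.normSq (h (b + t * e)))

lemma hasDerivAt_param (F : ℂ → ℂ) (b e : ℂ) (t : ℝ)
    (hF : DifferentiableAt ℂ F (b + t * e)) :
    HasDerivAt (fun s : ℝ => F (b + s * e)) (e * deriv F (b + t * e)) t := by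
  have hin : HasDerivAt (fun ζ : ℂ => b + ζ * e) e (t : ℂ) := by
    simpa using ((hasDerivAt_id ((t : ℂ))).mul_const e).const_add b
  have h1 : HasDerivAt (fun ζ : ℂ => F (b + ζ * e)) (e * deriv F (b + t * e)) (t : ℂ) := by
    simpa [mul_comm, Function.comp_def] using (hF.hasDerivAt.comp (t : ℂ) hin)
  exact h1.comp_ofReal

lemma hasDerivAt_conj_comp {H : ℝ → ℂ} {H' : ℂ} {t : ℝ} (hH : HasDerivAt H H' t) :
    HasDerivAt (fun s => (starRingEnd ℂ) (H s)) ((starRingEnd ℂ) H') t := by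
  have := (Complex.conjCLE.toContinuousLinearMap.hasFDerivAt (x := H t)).comp_hasDerivAt t hH
  simpa [Function.comp_def] using this

lemma hasDerivAt_normSq_comp {H : ℝ → ℂ} {H' : ℂ} {t : ℝ} (hH : HasDerivAt H H' t) :
    HasDerivAt (fun s => Complex.normSq (H s)) (2 * ((starRingEnd ℂ) (H t) * H').re) t := by
  have hmul : HasDerivAt (fun s => (starRingEnd ℂ) (H s) * H s)
      ((starRingEnd ℂ) H' * H t + (starRingEnd ℂ) (H t) * H') t :=
    (hasDerivAt_conj_comp hH).mul hH
  have hre := (Complex.reCLM.hasFDerivAt (x := (starRingEnd ℂ) (H t) * H t)).comp_hasDerivAt t hmul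
  have heq : (fun s => Complex.reCLM ((starRingEnd ℂ) (H s) * H s))
      = fun s => Complex.normSq (H s) := by
    funext s
    simp [Complex.mul_re, Complex.normSq_apply, Complex.conj_re, Complex.conj_im]
  simp only [Function.comp_def] at hre
  rw [heq] at hre
  refine hre.congr_deriv ?_
  simp [Complex.add_re, Complex.mul_re, Complex.conj_re, Complex.conj_im]
  ring

lemma hasDerivAt_slice (h : ℂ → ℂ) (c : ℝ) (b e : ℂ) (t : ℝ)
    (hd : DifferentiableAt ℂ h (b + t * e))
    (hpos : 0 < c + Complex.normSq (h (b + t * e))) :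
    HasDerivAt (fun s : ℝ => Real.log (c + Complex.normSq (h (b + s * e))))
      (Afun h c b e t) t := by
  have hH := hasDerivAt_param h b e t hd
  have hq : HasDerivAt (fun s : ℝ => c + Complex.normSq (h (b + s * e)))
      (2 * ((starRingEnd ℂ) (h (b + t * e)) * (e * deriv h (b + t * e))).re) t :=
    (hasDerivAt_normSq_comp hH).const_add c
  simpa [Afun] using hq.log (ne_of_gt hpos)

lemma hasDerivAt_Afun (h : ℂ → ℂ) (c : ℝ) (b e : ℂ) (t : ℝ)
    (h1 : DifferentiableAt ℂ h (b + t * e))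
    (h2 : DifferentiableAt ℂ (deriv h) (b + t * e))
    (hpos : 0 < c + Complex.normSq (h (b + t * e))) :
    HasDerivAt (Afun h c b e)
      (((2 * Complex.normSq (e * deriv h (b + t * e))
          + 2 * ((starRingEnd ℂ) (h (b + t * e)) * (e * e * deriv (deriv h) (b + t * e))).re)
            * (c + Complex.normSq (h (b + t * e)))
        - (2 * ((starRingEnd ℂ) (h (b + t * e)) * (e * deriv h (b + t * e))).re) ^ 2)
        / (c + Complex.normSq (h (b + t * e))) ^ 2) t := by
  set z := b + t * e with hz
  have hH := hasDerivAt_param h b e t h1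
  have hD := hasDerivAt_param (deriv h) b e t h2
  -- numerator
  have hmul : HasDerivAt (fun s : ℝ => (starRingEnd ℂ) (h (b + s * e)) * (e * deriv h (b + s * e)))
      ((starRingEnd ℂ) (e * deriv h z) * (e * deriv h z)
        + (starRingEnd ℂ) (h z) * (e * (e * deriv (deriv h) z))) t :=
    (hasDerivAt_conj_comp hH).mul (hD.const_mul e)
  have hre := (Complex.reCLM.hasFDerivAt
      (x := (starRingEnd ℂ) (h z) * (e * deriv h z))).comp_hasDerivAt t hmul
  simp only [Function.comp_def] at hre
  have hnum : HasDerivAt (fun s : ℝ => 2 * ((starRingEnd ℂ) (h (b + s * e)) * (e * deriv h (b + s * e))).re)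
      (2 * (((starRingEnd ℂ) (e * deriv h z) * (e * deriv h z)).re
        + ((starRingEnd ℂ) (h z) * (e * (e * deriv (deriv h) z))).re)) t := by
    have := hre.const_mul (2 : ℝ)
    simpa using this
  have hq : HasDerivAt (fun s : ℝ => c + Complex.normSq (h (b + s * e)))
      (2 * ((starRingEnd ℂ) (h z) * (e * deriv h z)).re) t :=
    (hasDerivAt_normSq_comp hH).const_add c
  have hdiv := hnum.div hq (ne_of_gt hpos)
  have : HasDerivAt (Afun h c b e)
      ((2 * (((starRingEnd ℂ) (e * deriv h z) * (e * deriv h z)).re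
          + ((starRingEnd ℂ) (h z) * (e * (e * deriv (deriv h) z))).re)
          * (c + Complex.normSq (h z))
        - 2 * ((starRingEnd ℂ) (h z) * (e * deriv h z)).re
          * (2 * ((starRingEnd ℂ) (h z) * (e * deriv h z)).re))
        / (c + Complex.normSq (h z)) ^ 2) t := by
    exact hdiv.congr_deriv (by ring)
  convert this using 1
  have hns : ((starRingEnd ℂ) (e * deriv h z) * (e * deriv h z)).re
      = Complex.normSq (e * deriv h z) := by
    simp [Complex.mul_re, Complex.normSq_apply, Complex.conj_re, Complex.conj_im]
    ring
  rw [hns]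
  ring_nf

noncomputable def Bfun (h : ℂ → ℂ) (c : ℝ) (e z : ℂ) : ℝ :=
  ((2 * Complex.normSq (e * deriv h z)
      + 2 * ((starRingEnd ℂ) (h z) * (e * e * deriv (deriv h) z)).re)
        * (c + Complex.normSq (h z))
    - (2 * ((starRingEnd ℂ) (h z) * (e * deriv h z)).re) ^ 2)
    / (c + Complex.normSq (h z)) ^ 2

lemma hasDerivAt_Afun' (h : ℂ → ℂ) (c : ℝ) (b e : ℂ) (t : ℝ)
    (h1 : DifferentiableAt ℂ h (b + t * e))
    (h2 : DifferentiableAt ℂ (deriv h) (b + t * e))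
    (hpos : 0 < c + Complex.normSq (h (b + t * e))) :
    HasDerivAt (Afun h c b e) (Bfun h c e (b + t * e)) t :=
  hasDerivAt_Afun h c b e t h1 h2 hpos

lemma lap2_congr {φ ψ : ℂ → ℝ} {w : ℂ} (h : φ =ᶠ[nhds w] ψ) : lap2 φ w = lap2 ψ w := by
  have hc1 : Filter.Tendsto (fun u : ℝ => (u : ℂ) + w.im * Complex.I) (nhds w.re) (nhds w) := by
    have : Continuous fun u : ℝ => (u : ℂ) + w.im * Complex.I := by continuity
    have := this.tendsto w.re
    simpa [Complex.re_add_im] using this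
  have hc2 : Filter.Tendsto (fun v : ℝ => (w.re : ℂ) + v * Complex.I) (nhds w.im) (nhds w) := by
    have : Continuous fun v : ℝ => (w.re : ℂ) + v * Complex.I := by continuity
    have := this.tendsto w.im
    simpa [Complex.re_add_im] using this
  have h1 : (fun u : ℝ => φ (u + w.im * Complex.I)) =ᶠ[nhds w.re]
      (fun u : ℝ => ψ (u + w.im * Complex.I)) := h.comp_tendsto hc1
  have h2 : (fun v : ℝ => φ (w.re + v * Complex.I)) =ᶠ[nhds w.im]
      (fun v : ℝ => ψ (w.re + v * Complex.I)) := h.comp_tendsto hc2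
  unfold lap2
  rw [h1.deriv.deriv_eq, h2.deriv.deriv_eq]

lemma secondDeriv_total (Ω : Set ℂ) (hΩ : IsOpen Ω) (f g : ℂ → ℂ)
    (hfa : AnalyticOnNhd ℂ f Ω) (hga : AnalyticOnNhd ℂ g Ω)
    (hf0 : ∀ z ∈ Ω, f z ≠ 0) (b e : ℂ) (t : ℝ) (hmem : b + t * e ∈ Ω) :
    deriv (deriv (fun s : ℝ => -(1/2) * Real.log (0 + Complex.normSq (f (b + s * e)))
        - Real.log (1 + Complex.normSq (g (b + s * e))))) t
      = -(1/2) * Bfun f 0 e (b + t * e) - Bfun g 1 e (b + t * e) := by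
  have hcont : Continuous fun s : ℝ => b + (s : ℂ) * e := by continuity
  have hU : IsOpen {s : ℝ | b + (s : ℂ) * e ∈ Ω} := hΩ.preimage hcont
  have hUt : {s : ℝ | b + (s : ℂ) * e ∈ Ω} ∈ nhds t := hU.mem_nhds hmem
  have posf : ∀ s : ℝ, b + (s : ℂ) * e ∈ Ω → 0 < 0 + Complex.normSq (f (b + s * e)) := by
    intro s hs
    simpa using Complex.normSq_pos.2 (hf0 _ hs)
  have posg : ∀ s : ℝ, (0:ℝ) < 1 + Complex.normSq (g (b + s * e)) := by
    intro s
    have := Complex.normSq_nonneg (g (b + s * e)); linarith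
  have ev1 : ∀ s : ℝ, b + (s : ℂ) * e ∈ Ω →
      HasDerivAt (fun s : ℝ => -(1/2) * Real.log (0 + Complex.normSq (f (b + s * e)))
        - Real.log (1 + Complex.normSq (g (b + s * e))))
        (-(1/2) * Afun f 0 b e s - Afun g 1 b e s) s := by
    intro s hs
    exact ((hasDerivAt_slice f 0 b e s ((hfa _ hs).differentiableAt) (posf s hs)).const_mul
      (-(1/2))).sub (hasDerivAt_slice g 1 b e s ((hga _ hs).differentiableAt) (posg s))
  have hev : deriv (fun s : ℝ => -(1/2) * Real.log (0 + Complex.normSq (f (b + s * e)))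
      - Real.log (1 + Complex.normSq (g (b + s * e)))) =ᶠ[nhds t]
      (fun s => -(1/2) * Afun f 0 b e s - Afun g 1 b e s) := by
    filter_upwards [hUt] with s hs
    exact (ev1 s hs).deriv
  rw [hev.deriv_eq]
  exact (((hasDerivAt_Afun' f 0 b e t ((hfa _ hmem).differentiableAt)
      ((hfa.deriv _ hmem).differentiableAt) (posf t hmem)).const_mul (-(1/2))).sub
    (hasDerivAt_Afun' g 1 b e t ((hga _ hmem).differentiableAt)
      ((hga.deriv _ hmem).differentiableAt) (posg t))).deriv

lemma Bsum (h : ℂ → ℂ) (c : ℝ) (z : ℂ) (hpos : 0 < c + Complex.normSq (h z)) :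
    Bfun h c 1 z + Bfun h c Complex.I z
      = 4 * c * Complex.normSq (deriv h z) / (c + Complex.normSq (h z)) ^ 2 := by
  unfold Bfun
  rw [← add_div]
  congr 1
  simp [Complex.normSq_apply, Complex.mul_re, Complex.mul_im, Complex.conj_re,
    Complex.conj_im, Complex.I_re, Complex.I_im]
  ring

lemma lap2_L (Ω : Set ℂ) (hΩ : IsOpen Ω) (f g : ℂ → ℂ)
    (hfa : AnalyticOnNhd ℂ f Ω) (hga : AnalyticOnNhd ℂ g Ω)
    (hf0 : ∀ z ∈ Ω, f z ≠ 0) (w : ℂ) (hw : w ∈ Ω) :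
    lap2 (fun z => -(1/2) * Real.log (0 + Complex.normSq (f z))
        - Real.log (1 + Complex.normSq (g z))) w
      = -(4 * Complex.normSq (deriv g w) / (1 + Complex.normSq (g w)) ^ 2) := by
  have hb1 : ((w.im : ℂ) * Complex.I) + (w.re : ℂ) * 1 = w := by
    simp [Complex.ext_iff]
  have hb2 : ((w.re : ℂ)) + (w.im : ℂ) * Complex.I = w := by
    simp [Complex.ext_iff]
  have hmem1 : ((w.im : ℂ) * Complex.I) + (w.re : ℂ) * 1 ∈ Ω := by rw [hb1]; exact hw
  have hmem2 : ((w.re : ℂ)) + (w.im : ℂ) * Complex.I ∈ Ω := by rw [hb2]; exact hw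
  have h1 := secondDeriv_total Ω hΩ f g hfa hga hf0 ((w.im : ℂ) * Complex.I) 1 w.re hmem1
  have h2 := secondDeriv_total Ω hΩ f g hfa hga hf0 ((w.re : ℂ)) Complex.I w.im hmem2
  rw [hb1] at h1
  rw [hb2] at h2
  have hfun1 : (fun u : ℝ => (fun z => -(1/2) * Real.log (0 + Complex.normSq (f z))
        - Real.log (1 + Complex.normSq (g z))) (↑u + ↑w.im * Complex.I))
      = (fun s : ℝ => -(1/2) * Real.log (0 + Complex.normSq (f ((w.im : ℂ) * Complex.I + ↑s * 1)))
        - Real.log (1 + Complex.normSq (g ((w.im : ℂ) * Complex.I + ↑s * 1)))) := by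
    funext u
    rw [show ((w.im : ℂ) * Complex.I + ↑u * 1) = ↑u + ↑w.im * Complex.I by ring]
  have hposf : 0 < 0 + Complex.normSq (f w) := by
    simpa using Complex.normSq_pos.2 (hf0 _ hw)
  have hposg : (0:ℝ) < 1 + Complex.normSq (g w) := by
    have := Complex.normSq_nonneg (g w); linarith
  have hBf := Bsum f 0 w hposf
  have hBg := Bsum g 1 w hposg
  unfold lap2
  rw [hfun1, h1, h2]
  have : -(1/2) * Bfun f 0 1 w - Bfun g 1 1 w + (-(1/2) * Bfun f 0 Complex.I w - Bfun g 1 Complex.I w)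
      = -(1/2) * (Bfun f 0 1 w + Bfun f 0 Complex.I w) - (Bfun g 1 1 w + Bfun g 1 Complex.I w) := by
    ring
  rw [this, hBf, hBg]
  ring

theorem stmt5' (Ω : Set ℂ) (hΩ : IsOpen Ω) (hΩc : IsConnected Ω)
    (g f : ℂ → ℂ)
    (hg : DifferentiableOn ℂ g Ω) (hf : DifferentiableOn ℂ f Ω)
    (hf0 : ∀ w ∈ Ω, f w ≠ 0) (hg0 : ∀ w ∈ Ω, deriv g w ≠ 0)
    (lam : ℂ → ℝ) (φ : ℂ → ℝ)
    (hlam : ∀ w ∈ Ω, lam w = ‖f w‖ ^ 2 * (1 + ‖g w‖ ^ 2) ^ 2)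
    (hφ : ∀ w ∈ Ω, φ w = -(1 / 2) * Real.log (lam w))
    (hLiouville : ∀ w ∈ Ω, lap2 φ w + Real.exp (2 * φ w) = 0) :
    (∀ w ∈ Ω, ‖f w * deriv g w‖ = 1 / 2) ∧
    ∃ θ₀ : ℝ, ∀ w ∈ Ω, f w = Complex.exp (θ₀ * Complex.I) / (2 * deriv g w) := by
  have hfa := hf.analyticOnNhd hΩ
  have hga := hg.analyticOnNhd hΩ
  have habs : ∀ w ∈ Ω, ‖f w * deriv g w‖ = 1 / 2 := by
    intro w hw
    have hposf : 0 < Complex.normSq (f w) := Complex.normSq_pos.2 (hf0 w hw)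
    have hposg : (0:ℝ) < 1 + Complex.normSq (g w) := by
      have := Complex.normSq_nonneg (g w); linarith
    have hlamw : lam w = Complex.normSq (f w) * (1 + Complex.normSq (g w)) ^ 2 := by
      rw [hlam w hw]; simp [Complex.sq_norm]
    have hlampos : 0 < lam w := by rw [hlamw]; positivity
    have heq : φ =ᶠ[nhds w] (fun z => -(1/2) * Real.log (0 + Complex.normSq (f z))
        - Real.log (1 + Complex.normSq (g z))) := by
      filter_upwards [hΩ.mem_nhds hw] with z hz
      have hpf : 0 < Complex.normSq (f z) := Complex.normSq_pos.2 (hf0 z hz)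
      have hpg : (0:ℝ) < 1 + Complex.normSq (g z) := by
        have := Complex.normSq_nonneg (g z); linarith
      rw [hφ z hz, hlam z hz,
        show ‖f z‖ ^ 2 * (1 + ‖g z‖ ^ 2) ^ 2
          = Complex.normSq (f z) * (1 + Complex.normSq (g z)) ^ 2 by simp [Complex.sq_norm],
        Real.log_mul (ne_of_gt hpf) (by positivity), Real.log_pow]
      rw [zero_add]
      push_cast
      ring
    have hlapφ : lap2 φ w = -(4 * Complex.normSq (deriv g w)
        / (1 + Complex.normSq (g w)) ^ 2) := by
      rw [lap2_congr heq]
      exact lap2_L Ω hΩ f g hfa hga hf0 w hw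
    have hexp : Real.exp (2 * φ w)
        = (Complex.normSq (f w) * (1 + Complex.normSq (g w)) ^ 2)⁻¹ := by
      rw [hφ w hw, show 2 * (-(1/2) * Real.log (lam w)) = -Real.log (lam w) by ring,
        Real.exp_neg, Real.exp_log hlampos, hlamw]
    have hLv := hLiouville w hw
    rw [hlapφ, hexp] at hLv
    have key : Complex.normSq (f w) * Complex.normSq (deriv g w) = 1/4 := by
      have h2 : (1 + Complex.normSq (g w)) ^ 2 ≠ 0 := by positivity
      field_simp at hLv
      nlinarith [hLv, sq_nonneg (1 + Complex.normSq (g w)), hposf, hposg]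
    rw [Complex.norm_def, Complex.normSq_mul, key,
      show (1/4 : ℝ) = (1/2)^2 by norm_num, Real.sqrt_sq (by norm_num)]
  refine ⟨habs, ?_⟩
  obtain ⟨z₀, hz₀⟩ := hΩc.nonempty
  have hgd : DifferentiableOn ℂ (deriv g) Ω := (hga.deriv).differentiableOn
  have hFd : DifferentiableOn ℂ (fun z => f z * deriv g z) Ω := hf.mul hgd
  have hmax : IsMaxOn (norm ∘ (fun z => f z * deriv g z)) Ω z₀ := by
    intro z hz
    simp only [Function.comp_apply, Set.mem_setOf_eq]
    rw [habs z hz, habs z₀ hz₀]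
  have hconst := Complex.eqOn_of_isPreconnected_of_isMaxOn_norm hΩc.isPreconnected
    hΩ hFd hz₀ hmax
  refine ⟨Complex.arg (f z₀ * deriv g z₀), ?_⟩
  intro w hw
  have hexp : Complex.exp (↑(Complex.arg (f z₀ * deriv g z₀)) * Complex.I)
      = 2 * (f z₀ * deriv g z₀) := by
    have h := Complex.norm_mul_exp_arg_mul_I (f z₀ * deriv g z₀)
    rw [habs z₀ hz₀] at h
    push_cast at h
    linear_combination 2 * h
  have hFw : f w * deriv g w = f z₀ * deriv g z₀ := hconst hw
  rw [eq_div_iff (by simp [hg0 w hw])]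
  rw [hexp]
  linear_combination 2 * hFw

/-- If `λ = |f|²(1+|g|²)²`, `φ = -½ log λ`, and the Liouville equation
`Δφ + e^{2φ} = 0` holds on a domain where `f` and `g′` never vanish, then
`|f·g′| = 1/2` and `f = (e^{iθ₀}/2)/g′` for some real constant `θ₀`. -/
theorem stmt5 (Ω : Set ℂ) (hΩ : IsOpen Ω) (hΩc : IsConnected Ω)
    (g f : ℂ → ℂ)
    (hg : DifferentiableOn ℂ g Ω) (hf : DifferentiableOn ℂ f Ω)
    (hf0 : ∀ w ∈ Ω, f w ≠ 0) (hg0 : ∀ w ∈ Ω, deriv g w ≠ 0)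
    (lam : ℂ → ℝ) (φ : ℂ → ℝ)
    (hlam : ∀ w ∈ Ω, lam w = ‖f w‖ ^ 2 * (1 + ‖g w‖ ^ 2) ^ 2)
    (hφ : ∀ w ∈ Ω, φ w = -(1 / 2) * Real.log (lam w))
    (hLiouville : ∀ w ∈ Ω, lap2 φ w + Real.exp (2 * φ w) = 0) :
    (∀ w ∈ Ω, ‖f w * deriv g w‖ = 1 / 2) ∧
    ∃ θ₀ : ℝ, ∀ w ∈ Ω, f w = Complex.exp (θ₀ * Complex.I) / (2 * deriv g w) := by
  have hfa := hf.analyticOnNhd hΩ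
  have hga := hg.analyticOnNhd hΩ
  have habs : ∀ w ∈ Ω, ‖f w * deriv g w‖ = 1 / 2 := by
    intro w hw
    have hposf : 0 < Complex.normSq (f w) := Complex.normSq_pos.2 (hf0 w hw)
    have hposg : (0:ℝ) < 1 + Complex.normSq (g w) := by
      have := Complex.normSq_nonneg (g w); linarith
    have hlamw : lam w = Complex.normSq (f w) * (1 + Complex.normSq (g w)) ^ 2 := by
      rw [hlam w hw]; simp [Complex.sq_norm]
    have hlampos : 0 < lam w := by rw [hlamw]; positivity
    have heq : φ =ᶠ[nhds w] (fun z => -(1/2) * Real.log (0 + Complex.normSq (f z))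
        - Real.log (1 + Complex.normSq (g z))) := by
      filter_upwards [hΩ.mem_nhds hw] with z hz
      have hpf : 0 < Complex.normSq (f z) := Complex.normSq_pos.2 (hf0 z hz)
      have hpg : (0:ℝ) < 1 + Complex.normSq (g z) := by
        have := Complex.normSq_nonneg (g z); linarith
      rw [hφ z hz, hlam z hz,
        show ‖f z‖ ^ 2 * (1 + ‖g z‖ ^ 2) ^ 2
          = Complex.normSq (f z) * (1 + Complex.normSq (g z)) ^ 2 by simp [Complex.sq_norm],
        Real.log_mul (ne_of_gt hpf) (by positivity), Real.log_pow]
      rw [zero_add]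
      push_cast
      ring
    have hlapφ : lap2 φ w = -(4 * Complex.normSq (deriv g w)
        / (1 + Complex.normSq (g w)) ^ 2) := by
      rw [lap2_congr heq]
      exact lap2_L Ω hΩ f g hfa hga hf0 w hw
    have hexp : Real.exp (2 * φ w)
        = (Complex.normSq (f w) * (1 + Complex.normSq (g w)) ^ 2)⁻¹ := by
      rw [hφ w hw, show 2 * (-(1/2) * Real.log (lam w)) = -Real.log (lam w) by ring,
        Real.exp_neg, Real.exp_log hlampos, hlamw]
    have hLv := hLiouville w hw
    rw [hlapφ, hexp] at hLv
    have key : Complex.normSq (f w) * Complex.normSq (deriv g w) = 1/4 := by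
      have h2 : (1 + Complex.normSq (g w)) ^ 2 ≠ 0 := by positivity
      field_simp at hLv
      nlinarith [hLv, sq_nonneg (1 + Complex.normSq (g w)), hposf, hposg]
    rw [Complex.norm_def, Complex.normSq_mul, key,
      show (1/4 : ℝ) = (1/2)^2 by norm_num, Real.sqrt_sq (by norm_num)]
  refine ⟨habs, ?_⟩
  obtain ⟨z₀, hz₀⟩ := hΩc.nonempty
  have hgd : DifferentiableOn ℂ (deriv g) Ω := (hga.deriv).differentiableOn
  have hFd : DifferentiableOn ℂ (fun z => f z * deriv g z) Ω := hf.mul hgd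
  have hmax : IsMaxOn (norm ∘ (fun z => f z * deriv g z)) Ω z₀ := by
    intro z hz
    simp only [Function.comp_apply, Set.mem_setOf_eq]
    rw [habs z hz, habs z₀ hz₀]
  have hconst := Complex.eqOn_of_isPreconnected_of_isMaxOn_norm hΩc.isPreconnected
    hΩ hFd hz₀ hmax
  refine ⟨Complex.arg (f z₀ * deriv g z₀), ?_⟩
  intro w hw
  have hexp : Complex.exp (↑(Complex.arg (f z₀ * deriv g z₀)) * Complex.I)
      = 2 * (f z₀ * deriv g z₀) := by
    have h := Complex.norm_mul_exp_arg_mul_I (f z₀ * deriv g z₀)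
    rw [habs z₀ hz₀] at h
    push_cast at h
    linear_combination 2 * h
  have hFw : f w * deriv g w = f z₀ * deriv g z₀ := hconst hw
  rw [eq_div_iff (by simp [hg0 w hw])]
  rw [hexp]
  linear_combination 2 * hFw
end

section
/- If a free boundary minimal surface in the unit ball B³ ⊂ ℝ³ has a boundary component which is an equator (a great circle of ∂B³), then along that boundary component the normal curvature of the surface in the direction of the boundary vanishes, hence every point of that boundary component is an umbilic point of the (minimal) surface. -/
open scoped RealInnerProductSpace

/-- If a boundary component of a free boundary minimal surface in the
unit ball is an equator (unit-speed great circle, so `U″ = -U`), met orthogonally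
(so the surface unit normal `N` along the boundary is orthogonal to both the
position vector `U` and the tangent `U′`), then the normal curvature
`⟪U″, N⟫` in the boundary direction vanishes; since the boundary is a line of
curvature (`κ₁ = ⟪U″, N⟫`) and the surface is minimal (`κ₁ + κ₂ = 0`), both
principal curvatures vanish: every boundary point is umbilic. -/
theorem stmt16 (U N : ℝ → EuclideanSpace ℝ (Fin 3)) (κ₁ κ₂ : ℝ → ℝ)
    (hU : ContDiff ℝ (⊤ : ℕ∞) U)
    (hsphere : ∀ s, ‖U s‖ = 1)
    (hunit : ∀ s, ‖deriv U s‖ = 1)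
    (hgreat : ∀ s, deriv (deriv U) s = -U s)
    (hNunit : ∀ s, ‖N s‖ = 1)
    (horth₁ : ∀ s, ⟪N s, U s⟫ = 0)
    (horth₂ : ∀ s, ⟪N s, deriv U s⟫ = 0)
    (hminimal : ∀ s, κ₁ s + κ₂ s = 0)
    (hloc : ∀ s, κ₁ s = ⟪deriv (deriv U) s, N s⟫) :
    ∀ s, ⟪deriv (deriv U) s, N s⟫ = 0 ∧ κ₁ s = 0 ∧ κ₂ s = 0 := by
  intro s
  have h0 : ⟪deriv (deriv U) s, N s⟫ = 0 := by
    rw [hgreat s, inner_neg_left, real_inner_comm, horth₁ s, neg_zero]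
  have h1 : κ₁ s = 0 := by rw [hloc s, h0]
  have h2 : κ₂ s = 0 := by have := hminimal s; linarith
  exact ⟨h0, h1, h2⟩
end
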